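/- arXiv:2006.10863 — 8 statements merged into one kernel-verified Lean document; each statement's English description precedes it below -/
import Mathlib

section
/- Let (C,d) be a complete metric space, α ∈ [0,1), and ψ : [0,∞)³ → [0,∞) a continuous function such that whenever b ≤ ψ(a,a,b) or b ≤ ψ(b,a,a) or b ≤ ψ(a,b,a) one has b ≤ αa. If T₁, T₂ : C → C satisfy d(T₁x, T₂y) ≤ ψ(d(x,y), d(x,T₁x), d(y,T₂y)) for all x,y ∈ C, then T₁ and T₂ have a unique common fixed point. -/
/-!
Starting from any point, alternately apply `T₁` and `T₂`. Taking `y = T₁ x` (or `x = T₂ y`) in the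
contractive condition gives an inequality of the form `b ≤ ψ(a,a,b)` (or `b ≤ ψ(a,b,a)`), so each
step shrinks the distance between consecutive points by the factor `α`; the orbit is therefore
Cauchy. Passing to the limit in the contractive condition, using continuity of `ψ`, shows that
the limit is fixed by both maps. Uniqueness is the case `b ≤ ψ(b,0,0)`.
-/

open Filter Topology

def PsiControl (α : ℝ) (ψ : ℝ → ℝ → ℝ → ℝ) : Prop :=
  ∀ a b : ℝ, 0 ≤ a → 0 ≤ b → (b ≤ ψ a a b ∨ b ≤ ψ b a a ∨ b ≤ ψ a b a) → b ≤ α * a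

def PsiContractive {C : Type*} [MetricSpace C] (ψ : ℝ → ℝ → ℝ → ℝ) (T₁ T₂ : C → C) : Prop :=
  ∀ x y : C, dist (T₁ x) (T₂ y) ≤ ψ (dist x y) (dist x (T₁ x)) (dist y (T₂ y))

/-- The orbit `x, T₁ x, T₂ (T₁ x), …`; the recursion exchanges the maps, so the tail of an orbit
is again an orbit. -/
def altOrbit {C : Type*} (T₁ T₂ : C → C) (x : C) : ℕ → C
  | 0 => x
  | n + 1 => altOrbit T₂ T₁ (T₁ x) n

theorem altOrbit_two_mul_add_one {C : Type*} (T₁ T₂ : C → C) (x : C) (n : ℕ) :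
    altOrbit T₁ T₂ x (2 * n + 1) = T₁ (altOrbit T₁ T₂ x (2 * n)) := by
  induction n generalizing x with
  | zero => rfl
  | succ n ih => exact ih (T₂ (T₁ x))

section

variable {C : Type*} [MetricSpace C] {α : ℝ} {ψ : ℝ → ℝ → ℝ → ℝ} {T₁ T₂ : C → C}

/- This symmetry lets every statement proved for `T₂` be transferred to `T₁`. -/
theorem PsiControl.swap (hψ : PsiControl α ψ) : PsiControl α fun a b c => ψ a c b :=
  fun a b ha hb h => hψ a b ha hb (by tauto)

theorem PsiContractive.swap (hT : PsiContractive ψ T₁ T₂) :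
    PsiContractive (fun a b c => ψ a c b) T₂ T₁ := fun x y => by
  simpa only [dist_comm] using hT y x

theorem PsiControl.eq_zero {b : ℝ} (hψ : PsiControl α ψ) (hb : 0 ≤ b)
    (h : b ≤ ψ 0 0 b ∨ b ≤ ψ b 0 0 ∨ b ≤ ψ 0 b 0) : b = 0 :=
  le_antisymm (by simpa using hψ 0 b le_rfl hb h) hb

theorem PsiContractive.dist_apply_apply_le (hψ : PsiControl α ψ) (hT : PsiContractive ψ T₁ T₂)
    (x : C) : dist (T₁ x) (T₂ (T₁ x)) ≤ α * dist x (T₁ x) :=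
  hψ _ _ dist_nonneg dist_nonneg (Or.inl (hT x (T₁ x)))

theorem PsiContractive.eq_of_apply_eq (hψ : PsiControl α ψ) (hT : PsiContractive ψ T₁ T₂)
    {w z : C} (hw : T₁ w = w) (hz : T₂ z = z) : w = z := by
  have h := hT w z
  simp only [hw, hz, dist_self] at h
  exact dist_eq_zero.1 (hψ.eq_zero dist_nonneg (Or.inr (Or.inl h)))

theorem PsiContractive.apply_eq_of_tendsto
    (hcont : Continuous fun p : ℝ × ℝ × ℝ => ψ p.1 p.2.1 p.2.2) (hψ : PsiControl α ψ)
    (hT : PsiContractive ψ T₁ T₂) {u : ℕ → C} {z : C} (hu : Tendsto u atTop (𝓝 z))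
    (hTu : Tendsto (fun n => T₁ (u n)) atTop (𝓝 z)) : T₂ z = z := by
  have hargs : Tendsto (fun n => (dist (u n) z, dist (u n) (T₁ (u n)), dist z (T₂ z))) atTop
      (𝓝 (0, 0, dist z (T₂ z))) := by
    simpa only [dist_self] using (hu.dist (tendsto_const_nhds (x := z))).prodMk_nhds
      ((hu.dist hTu).prodMk_nhds (tendsto_const_nhds (x := dist z (T₂ z))))
  have hlim : dist z (T₂ z) ≤ ψ 0 0 (dist z (T₂ z)) :=
    le_of_tendsto_of_tendsto' (hTu.dist tendsto_const_nhds) ((hcont.tendsto _).comp hargs)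
      fun n => hT (u n) z
  exact (dist_eq_zero.1 (hψ.eq_zero dist_nonneg (Or.inl hlim))).symm

theorem dist_altOrbit_le (hα : 0 ≤ α) (hψ : PsiControl α ψ) (hT : PsiContractive ψ T₁ T₂)
    (x : C) (n : ℕ) :
    dist (altOrbit T₁ T₂ x n) (altOrbit T₁ T₂ x (n + 1)) ≤ dist x (T₁ x) * α ^ n := by
  induction n generalizing ψ T₁ T₂ x with
  | zero => simp [altOrbit]
  | succ n ih =>
    calc dist (altOrbit T₂ T₁ (T₁ x) n) (altOrbit T₂ T₁ (T₁ x) (n + 1))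
        ≤ dist (T₁ x) (T₂ (T₁ x)) * α ^ n := ih hψ.swap hT.swap (T₁ x)
      _ ≤ α * dist x (T₁ x) * α ^ n := by
        gcongr
        exact hT.dist_apply_apply_le hψ x
      _ = dist x (T₁ x) * α ^ (n + 1) := by ring

theorem PsiContractive.apply_eq_of_tendsto_altOrbit
    (hcont : Continuous fun p : ℝ × ℝ × ℝ => ψ p.1 p.2.1 p.2.2) (hψ : PsiControl α ψ)
    (hT : PsiContractive ψ T₁ T₂) {x z : C} (hz : Tendsto (altOrbit T₁ T₂ x) atTop (𝓝 z)) :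
    T₂ z = z := by
  have heven : Tendsto (fun n : ℕ => 2 * n) atTop atTop :=
    (strictMono_mul_left_of_pos two_pos).tendsto_atTop
  have hodd : Tendsto (fun n : ℕ => 2 * n + 1) atTop atTop :=
    tendsto_atTop_mono (fun n => Nat.le_succ _) heven
  refine hT.apply_eq_of_tendsto hcont hψ (hz.comp heven) ?_
  simpa only [Function.comp_def, altOrbit_two_mul_add_one] using hz.comp hodd

end

theorem stmt3_general {C : Type*} [MetricSpace C] [CompleteSpace C] [Nonempty C]
    (α : ℝ) (hα0 : 0 ≤ α) (hα1 : α < 1)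
    (ψ : ℝ → ℝ → ℝ → ℝ)
    (hcont : Continuous (fun p : ℝ × ℝ × ℝ => ψ p.1 p.2.1 p.2.2))
    (hψ : ∀ a b : ℝ, 0 ≤ a → 0 ≤ b →
      (b ≤ ψ a a b ∨ b ≤ ψ b a a ∨ b ≤ ψ a b a) → b ≤ α * a)
    (T₁ T₂ : C → C)
    (hT : ∀ x y : C,
      dist (T₁ x) (T₂ y) ≤ ψ (dist x y) (dist x (T₁ x)) (dist y (T₂ y))) :
    ∃! z : C, T₁ z = z ∧ T₂ z = z := by
  replace hψ : PsiControl α ψ := hψ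
  replace hT : PsiContractive ψ T₁ T₂ := hT
  obtain ⟨x₀⟩ := ‹Nonempty C›
  obtain ⟨z, hz⟩ := cauchySeq_tendsto_of_complete
    (cauchySeq_of_le_geometric α _ hα1 (dist_altOrbit_le hα0 hψ hT x₀))
  have hcont' : Continuous fun p : ℝ × ℝ × ℝ => ψ p.1 p.2.2 p.2.1 :=
    hcont.comp (by fun_prop : Continuous fun p : ℝ × ℝ × ℝ => (p.1, p.2.2, p.2.1))
  have hz₁ : T₁ z = z := hT.swap.apply_eq_of_tendsto_altOrbit hcont' hψ.swap
    ((tendsto_add_atTop_iff_nat 1).2 hz)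
  have hz₂ : T₂ z = z := hT.apply_eq_of_tendsto_altOrbit hcont hψ hz
  exact ⟨z, ⟨hz₁, hz₂⟩, fun w hw => hT.eq_of_apply_eq hψ hw.1 hz₂⟩

/-- Common fixed point theorem: if T₁, T₂ on a complete metric space satisfy
d(T₁x,T₂y) ≤ ψ(d(x,y), d(x,T₁x), d(y,T₂y)) for some ψ ∈ Ψ_α with α ∈ [0,1),
then T₁ and T₂ have a unique common fixed point. -/
theorem stmt3 {C : Type*} [MetricSpace C] [CompleteSpace C] [Nonempty C]
    (α : ℝ) (hα0 : 0 ≤ α) (hα1 : α < 1)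
    (ψ : ℝ → ℝ → ℝ → ℝ)
    (hcont : Continuous (fun p : ℝ × ℝ × ℝ => ψ p.1 p.2.1 p.2.2))
    (hnonneg : ∀ a b c : ℝ, 0 ≤ a → 0 ≤ b → 0 ≤ c → 0 ≤ ψ a b c)
    (hψ : ∀ a b : ℝ, 0 ≤ a → 0 ≤ b →
      (b ≤ ψ a a b ∨ b ≤ ψ b a a ∨ b ≤ ψ a b a) → b ≤ α * a)
    (T₁ T₂ : C → C)
    (hT : ∀ x y : C,
      dist (T₁ x) (T₂ y) ≤ ψ (dist x y) (dist x (T₁ x)) (dist y (T₂ y))) :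
    ∃! z : C, T₁ z = z ∧ T₂ z = z :=
  stmt3_general α hα0 hα1 ψ hcont hψ T₁ T₂ hT
end

section
/- Let (C,d) be a complete metric space, α ∈ [0,1), ψ ∈ Ψ_α, and T₁, T₂ : C → C satisfy d(T₁x, T₂y) ≤ ψ(d(x,y), d(x,T₁x), d(y,T₂y)) for all x,y. Fix u₀ ∈ C and define the sequence u by u_{2k+1} = T₁(u_{2k}) and u_{2k+2} = T₂(u_{2k+1}). Then d(u_{n+1}, u_{n+2}) ≤ α · d(u_n, u_{n+1}) for all n ≥ 0. -/
/-- Consecutive distances of the alternating Picard sequence contract by factor α. -/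
theorem stmt4 {C : Type*} [MetricSpace C] [CompleteSpace C]
    (α : ℝ) (hα0 : 0 ≤ α) (hα1 : α < 1)
    (ψ : ℝ → ℝ → ℝ → ℝ)
    (hcont : Continuous (fun p : ℝ × ℝ × ℝ => ψ p.1 p.2.1 p.2.2))
    (hnonneg : ∀ a b c : ℝ, 0 ≤ a → 0 ≤ b → 0 ≤ c → 0 ≤ ψ a b c)
    (hψ : ∀ a b : ℝ, 0 ≤ a → 0 ≤ b →
      (b ≤ ψ a a b ∨ b ≤ ψ b a a ∨ b ≤ ψ a b a) → b ≤ α * a)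
    (T₁ T₂ : C → C)
    (hT : ∀ x y : C,
      dist (T₁ x) (T₂ y) ≤ ψ (dist x y) (dist x (T₁ x)) (dist y (T₂ y)))
    (u : ℕ → C)
    (hu₁ : ∀ k : ℕ, u (2 * k + 1) = T₁ (u (2 * k)))
    (hu₂ : ∀ k : ℕ, u (2 * k + 2) = T₂ (u (2 * k + 1))) :
    ∀ n : ℕ, dist (u (n + 1)) (u (n + 2)) ≤ α * dist (u n) (u (n + 1)) := by
  intro n
  rcases Nat.even_or_odd n with ⟨k, hk⟩ | ⟨k, hk⟩
  · have hn : n = 2 * k := by omega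
    rw [hn]
    have h1 := hu₁ k
    have h2 := hu₂ k
    have key : dist (u (2 * k + 1)) (u (2 * k + 2)) ≤
        ψ (dist (u (2 * k)) (u (2 * k + 1))) (dist (u (2 * k)) (u (2 * k + 1)))
          (dist (u (2 * k + 1)) (u (2 * k + 2))) := by
      have := hT (u (2 * k)) (u (2 * k + 1))
      rw [← h1, ← h2] at this
      exact this
    exact hψ _ _ dist_nonneg dist_nonneg (Or.inl key)
  · have hn : n = 2 * k + 1 := by omega
    rw [hn]
    have h2 := hu₂ k
    have h1 := hu₁ (k + 1)
    have e1 : 2 * (k + 1) = 2 * k + 1 + 1 := by ring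
    have e2 : 2 * (k + 1) + 1 = 2 * k + 1 + 2 := by ring
    rw [e1] at h1
    have key : dist (u (2 * k + 1 + 1)) (u (2 * k + 1 + 2)) ≤
        ψ (dist (u (2 * k + 1)) (u (2 * k + 1 + 1)))
          (dist (u (2 * k + 1 + 1)) (u (2 * k + 1 + 2)))
          (dist (u (2 * k + 1)) (u (2 * k + 1 + 1))) := by
      have h := hT (u (2 * k + 1 + 1)) (u (2 * k + 1))
      rw [← h1] at h
      have h2' : u (2 * k + 2) = u (2 * k + 1 + 1) := by norm_num
      rw [h2', ← h2, h2'] at h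
      calc dist (u (2 * k + 1 + 1)) (u (2 * k + 1 + 2))
          = dist (u (2 * k + 1 + 2)) (u (2 * k + 1 + 1)) := dist_comm _ _
        _ ≤ _ := by
            rw [dist_comm (u (2 * k + 1 + 1)) (u (2 * k + 1))] at h
            exact h
    exact hψ _ _ dist_nonneg dist_nonneg (Or.inr (Or.inr key))
end

section
/- Let (C,d) be a complete metric space, α ∈ [0,1), ψ ∈ Ψ_α, and T₁, T₂ : C → C satisfy d(T₁x, T₂y) ≤ ψ(d(x,y), d(x,T₁x), d(y,T₂y)) for all x,y. Then the alternating Picard sequence u₀, u₁ = T₁u₀, u₂ = T₂u₁, u₃ = T₁u₂, … is a Cauchy sequence. -/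
/-- The alternating Picard sequence for a pair of maps satisfying the ψ-contractive
condition is a Cauchy sequence. -/
theorem stmt5 {C : Type*} [MetricSpace C] [CompleteSpace C]
    (α : ℝ) (hα0 : 0 ≤ α) (hα1 : α < 1)
    (ψ : ℝ → ℝ → ℝ → ℝ)
    (hcont : Continuous (fun p : ℝ × ℝ × ℝ => ψ p.1 p.2.1 p.2.2))
    (hnonneg : ∀ a b c : ℝ, 0 ≤ a → 0 ≤ b → 0 ≤ c → 0 ≤ ψ a b c)
    (hψ : ∀ a b : ℝ, 0 ≤ a → 0 ≤ b →
      (b ≤ ψ a a b ∨ b ≤ ψ b a a ∨ b ≤ ψ a b a) → b ≤ α * a)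
    (T₁ T₂ : C → C)
    (hT : ∀ x y : C,
      dist (T₁ x) (T₂ y) ≤ ψ (dist x y) (dist x (T₁ x)) (dist y (T₂ y)))
    (u : ℕ → C)
    (hu₁ : ∀ k : ℕ, u (2 * k + 1) = T₁ (u (2 * k)))
    (hu₂ : ∀ k : ℕ, u (2 * k + 2) = T₂ (u (2 * k + 1))) :
    CauchySeq u := by
  have step : ∀ n : ℕ, dist (u (n + 1)) (u (n + 2)) ≤ α * dist (u n) (u (n + 1)) := by
    intro n
    rcases Nat.even_or_odd n with ⟨k, hk⟩ | ⟨k, hk⟩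
    · have hn : n = 2 * k := by omega
      subst hn
      apply hψ _ _ dist_nonneg dist_nonneg
      left
      have h := hT (u (2 * k)) (u (2 * k + 1))
      rw [← hu₁ k, ← hu₂ k] at h
      exact h
    · have hn : n = 2 * k + 1 := by omega
      subst hn
      apply hψ _ _ dist_nonneg dist_nonneg
      right; right
      have h := hT (u (2 * k + 2)) (u (2 * k + 1))
      have eA : u (2 * k + 3) = T₁ (u (2 * k + 2)) := by
        have h' := hu₁ (k + 1)
        rwa [show 2 * (k + 1) + 1 = 2 * k + 3 by ring, show 2 * (k + 1) = 2 * k + 2 by ring] at h'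
      rw [← eA, ← hu₂ k] at h
      calc dist (u (2 * k + 1 + 1)) (u (2 * k + 1 + 2))
          = dist (u (2 * k + 1 + 2)) (u (2 * k + 1 + 1)) := dist_comm _ _
        _ ≤ ψ (dist (u (2 * k + 2)) (u (2 * k + 1)))
              (dist (u (2 * k + 2)) (u (2 * k + 3)))
              (dist (u (2 * k + 1)) (u (2 * k + 2))) := h
        _ = ψ (dist (u (2 * k + 1)) (u (2 * k + 1 + 1)))
              (dist (u (2 * k + 1 + 1)) (u (2 * k + 1 + 2)))
              (dist (u (2 * k + 1)) (u (2 * k + 1 + 1))) := by rw [dist_comm]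
  have geom : ∀ n : ℕ, dist (u n) (u (n + 1)) ≤ dist (u 0) (u 1) * α ^ n := by
    intro n
    induction n with
    | zero => simp
    | succ n ih =>
        calc dist (u (n + 1)) (u (n + 2)) ≤ α * dist (u n) (u (n + 1)) := step n
          _ ≤ α * (dist (u 0) (u 1) * α ^ n) := by
              exact mul_le_mul_of_nonneg_left ih hα0
          _ = dist (u 0) (u 1) * α ^ (n + 1) := by ring
  exact cauchySeq_of_le_geometric α (dist (u 0) (u 1)) hα1 geom
end

section
/- Let (C,d) be a complete metric space, α ∈ [0,1), ψ ∈ Ψ_α, and T₁, T₂ : C → C satisfy d(T₁x, T₂y) ≤ ψ(d(x,y), d(x,T₁x), d(y,T₂y)). Let z be the unique common fixed point of T₁ and T₂ and let {u_n} be the alternating Picard sequence from any u₀. Then for all n ≥ 1, d(u_n, z) ≤ (α^{n-1}/(1−α)) · d(u₀, u₁). -/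
/-!
Consecutive distances of the alternating sequence contract by the factor `α`: for an even step
the contractive condition yields `b ≤ ψ(a, a, b)`, for an odd step `b ≤ ψ(a, b, a)`. Hence the
sequence is Cauchy with the geometric tail bound `d(uₙ, L) ≤ αⁿ/(1-α) · d(u₀, u₁)` for its limit
`L`. Comparing `z = T₁ z` with `u_{2k+2} = T₂ u_{2k+1}` and letting `k → ∞` gives
`d(z, L) ≤ ψ(d(z, L), 0, 0)`, so `d(z, L) = 0` and `L = z`.
-/

open Filter Topology Function

lemma dist_le_geometric_of_dist_succ_succ_le {X : Type*} [PseudoMetricSpace X] {x : ℕ → X} {α : ℝ}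
    (hα : 0 ≤ α) (h : ∀ n, dist (x (n + 1)) (x (n + 2)) ≤ α * dist (x n) (x (n + 1))) (n : ℕ) :
    dist (x n) (x (n + 1)) ≤ dist (x 0) (x 1) * α ^ n := by
  induction n with
  | zero => simp
  | succ n ih =>
    calc dist (x (n + 1)) (x (n + 2)) ≤ α * dist (x n) (x (n + 1)) := h n
      _ ≤ α * (dist (x 0) (x 1) * α ^ n) := by gcongr
      _ = dist (x 0) (x 1) * α ^ (n + 1) := by ring

section AlternatingPicard

variable {C : Type*} [MetricSpace C] {α : ℝ} {ψ : ℝ → ℝ → ℝ → ℝ} {T₁ T₂ : C → C} {u : ℕ → C}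

lemma dist_succ_le_of_even
    (hψ : ∀ a b : ℝ, 0 ≤ a → 0 ≤ b → b ≤ ψ a a b → b ≤ α * a)
    (hT : ∀ x y : C, dist (T₁ x) (T₂ y) ≤ ψ (dist x y) (dist x (T₁ x)) (dist y (T₂ y)))
    (hu₁ : ∀ k : ℕ, u (2 * k + 1) = T₁ (u (2 * k)))
    (hu₂ : ∀ k : ℕ, u (2 * k + 2) = T₂ (u (2 * k + 1))) (k : ℕ) :
    dist (u (2 * k + 1)) (u (2 * k + 2)) ≤ α * dist (u (2 * k)) (u (2 * k + 1)) := by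
  refine hψ _ _ dist_nonneg dist_nonneg ?_
  simpa only [← hu₁, ← hu₂] using hT (u (2 * k)) (u (2 * k + 1))

lemma dist_succ_le_of_odd
    (hψ : ∀ a b : ℝ, 0 ≤ a → 0 ≤ b → b ≤ ψ a b a → b ≤ α * a)
    (hT : ∀ x y : C, dist (T₁ x) (T₂ y) ≤ ψ (dist x y) (dist x (T₁ x)) (dist y (T₂ y)))
    (hu₁ : ∀ k : ℕ, u (2 * k + 1) = T₁ (u (2 * k)))
    (hu₂ : ∀ k : ℕ, u (2 * k + 2) = T₂ (u (2 * k + 1))) (k : ℕ) :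
    dist (u (2 * k + 2)) (u (2 * k + 3)) ≤ α * dist (u (2 * k + 1)) (u (2 * k + 2)) := by
  refine hψ _ _ dist_nonneg dist_nonneg ?_
  have hu₃ : u (2 * k + 3) = T₁ (u (2 * k + 2)) := hu₁ (k + 1)
  have h := hT (u (2 * k + 2)) (u (2 * k + 1))
  rw [← hu₃, ← hu₂, dist_comm (u (2 * k + 3)), dist_comm (u (2 * k + 2)) (u (2 * k + 1))] at h
  exact h

lemma dist_succ_succ_le
    (hψ : ∀ a b : ℝ, 0 ≤ a → 0 ≤ b →
      (b ≤ ψ a a b ∨ b ≤ ψ b a a ∨ b ≤ ψ a b a) → b ≤ α * a)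
    (hT : ∀ x y : C, dist (T₁ x) (T₂ y) ≤ ψ (dist x y) (dist x (T₁ x)) (dist y (T₂ y)))
    (hu₁ : ∀ k : ℕ, u (2 * k + 1) = T₁ (u (2 * k)))
    (hu₂ : ∀ k : ℕ, u (2 * k + 2) = T₂ (u (2 * k + 1))) (n : ℕ) :
    dist (u (n + 1)) (u (n + 2)) ≤ α * dist (u n) (u (n + 1)) := by
  obtain ⟨k, rfl | rfl⟩ := Nat.even_or_odd' n
  · exact dist_succ_le_of_even (fun a b ha hb h ↦ hψ a b ha hb (.inl h)) hT hu₁ hu₂ k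
  · exact dist_succ_le_of_odd (fun a b ha hb h ↦ hψ a b ha hb (.inr (.inr h))) hT hu₁ hu₂ k

lemma eq_of_tendsto_of_isFixedPt
    (hcont : Continuous (fun p : ℝ × ℝ × ℝ => ψ p.1 p.2.1 p.2.2))
    (hψ : ∀ a b : ℝ, 0 ≤ a → 0 ≤ b → b ≤ ψ b a a → b ≤ α * a)
    (hT : ∀ x y : C, dist (T₁ x) (T₂ y) ≤ ψ (dist x y) (dist x (T₁ x)) (dist y (T₂ y)))
    (hu₂ : ∀ k : ℕ, u (2 * k + 2) = T₂ (u (2 * k + 1)))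
    {z L : C} (hz : IsFixedPt T₁ z) (hL : Tendsto u atTop (𝓝 L)) : L = z := by
  have hodd : Tendsto (fun k ↦ u (2 * k + 1)) atTop (𝓝 L) :=
    hL.comp (tendsto_atTop_mono (fun k ↦ by dsimp only [id]; omega) tendsto_id)
  have heven : Tendsto (fun k ↦ u (2 * k + 2)) atTop (𝓝 L) :=
    hL.comp (tendsto_atTop_mono (fun k ↦ by dsimp only [id]; omega) tendsto_id)
  have hstep : ∀ k, dist z (u (2 * k + 2)) ≤
      ψ (dist z (u (2 * k + 1))) 0 (dist (u (2 * k + 1)) (u (2 * k + 2))) := by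
    intro k
    simpa only [hz.eq, dist_self, ← hu₂] using hT z (u (2 * k + 1))
  have hψlim : Tendsto (fun k ↦ ψ (dist z (u (2 * k + 1))) 0 (dist (u (2 * k + 1)) (u (2 * k + 2))))
      atTop (𝓝 (ψ (dist z L) 0 0)) := by
    have hlim := ((tendsto_const_nhds (x := z)).dist hodd).prodMk_nhds
      ((tendsto_const_nhds (x := (0 : ℝ))).prodMk_nhds (hodd.dist heven))
    rw [dist_self] at hlim
    exact (hcont.tendsto _).comp hlim
  have hzL : dist z L ≤ ψ (dist z L) 0 0 :=
    le_of_tendsto_of_tendsto' (tendsto_const_nhds.dist heven) hψlim hstep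
  have hzL₀ : dist z L ≤ 0 := by simpa using hψ 0 _ le_rfl dist_nonneg hzL
  exact (dist_le_zero.mp hzL₀).symm

end AlternatingPicard

theorem stmt6_general {C : Type*} [MetricSpace C] [CompleteSpace C]
    (α : ℝ) (hα0 : 0 ≤ α) (hα1 : α < 1)
    (ψ : ℝ → ℝ → ℝ → ℝ)
    (hcont : Continuous (fun p : ℝ × ℝ × ℝ => ψ p.1 p.2.1 p.2.2))
    (hψ : ∀ a b : ℝ, 0 ≤ a → 0 ≤ b →
      (b ≤ ψ a a b ∨ b ≤ ψ b a a ∨ b ≤ ψ a b a) → b ≤ α * a)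
    (T₁ T₂ : C → C)
    (hT : ∀ x y : C,
      dist (T₁ x) (T₂ y) ≤ ψ (dist x y) (dist x (T₁ x)) (dist y (T₂ y)))
    (z : C) (hz : T₁ z = z ∧ T₂ z = z)
    (u : ℕ → C)
    (hu₁ : ∀ k : ℕ, u (2 * k + 1) = T₁ (u (2 * k)))
    (hu₂ : ∀ k : ℕ, u (2 * k + 2) = T₂ (u (2 * k + 1))) :
    ∀ n : ℕ, 1 ≤ n →
      dist (u n) z ≤ α ^ (n - 1) / (1 - α) * dist (u 0) (u 1) := by
  intro n _
  have hgeo := dist_le_geometric_of_dist_succ_succ_le hα0 (dist_succ_succ_le hψ hT hu₁ hu₂)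
  obtain ⟨L, hL⟩ := cauchySeq_tendsto_of_complete (cauchySeq_of_le_geometric α _ hα1 hgeo)
  obtain rfl : L = z :=
    eq_of_tendsto_of_isFixedPt hcont (fun a b ha hb h ↦ hψ a b ha hb (.inr (.inl h))) hT hu₂ hz.1 hL
  have h1α : 0 < 1 - α := sub_pos.mpr hα1
  calc dist (u n) L ≤ dist (u 0) (u 1) * α ^ n / (1 - α) :=
        dist_le_of_le_geometric_of_tendsto α _ hα1 hgeo hL n
    _ = α ^ n / (1 - α) * dist (u 0) (u 1) := by ring
    _ ≤ α ^ (n - 1) / (1 - α) * dist (u 0) (u 1) := by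
        gcongr ?_ / _ * _
        exact pow_le_pow_of_le_one hα0 hα1.le (Nat.sub_le n 1)

/-- Error estimate: the alternating Picard sequence converges to the common fixed
point z with d(uₙ, z) ≤ (α^{n-1}/(1-α)) · d(u₀, u₁). -/
theorem stmt6 {C : Type*} [MetricSpace C] [CompleteSpace C]
    (α : ℝ) (hα0 : 0 ≤ α) (hα1 : α < 1)
    (ψ : ℝ → ℝ → ℝ → ℝ)
    (hcont : Continuous (fun p : ℝ × ℝ × ℝ => ψ p.1 p.2.1 p.2.2))
    (hnonneg : ∀ a b c : ℝ, 0 ≤ a → 0 ≤ b → 0 ≤ c → 0 ≤ ψ a b c)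
    (hψ : ∀ a b : ℝ, 0 ≤ a → 0 ≤ b →
      (b ≤ ψ a a b ∨ b ≤ ψ b a a ∨ b ≤ ψ a b a) → b ≤ α * a)
    (T₁ T₂ : C → C)
    (hT : ∀ x y : C,
      dist (T₁ x) (T₂ y) ≤ ψ (dist x y) (dist x (T₁ x)) (dist y (T₂ y)))
    (z : C) (hz : T₁ z = z ∧ T₂ z = z)
    (hzuniq : ∀ w : C, T₁ w = w ∧ T₂ w = w → w = z)
    (u : ℕ → C)
    (hu₁ : ∀ k : ℕ, u (2 * k + 1) = T₁ (u (2 * k)))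
    (hu₂ : ∀ k : ℕ, u (2 * k + 2) = T₂ (u (2 * k + 1))) :
    ∀ n : ℕ, 1 ≤ n →
      dist (u n) z ≤ α ^ (n - 1) / (1 - α) * dist (u 0) (u 1) :=
  stmt6_general α hα0 hα1 ψ hcont hψ T₁ T₂ hT z hz u hu₁ hu₂
end

section
/- Let (C,d) be a complete metric space, M, N, O ≥ 0 with M+N+O < 1, and T₁, T₂ : C → C satisfy d(T₁x, T₂y) ≤ M·d(x,y) + N·d(x,T₁x) + O·d(y,T₂y) for all x,y ∈ C. Then T₁ and T₂ have a unique common fixed point. -/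
/-!
Iterate `S = T₂ ∘ T₁`. Applying the condition to the pairs `(x, T₁ x)` and `(T₂ y, y)` shows
`d(T₁ x, T₂ T₁ x) ≤ k₁ d(x, T₁ x)` and `d(T₂ y, T₁ T₂ y) ≤ k₂ d(y, T₂ y)` with
`k₁ = (M + N)/(1 - O) < 1` and `k₂ = (M + O)/(1 - N) < 1`, so the displacement `d(x, T₁ x)` shrinks
by `k₁ k₂` along the orbit of `S`, which is therefore Cauchy. At its limit `z`, passing to the limit
in the condition at `(z, T₁ xₙ)` gives `d(T₁ z, z) ≤ N d(z, T₁ z)`, so `T₁ z = z`; the condition at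
`(z, z)` then forces `T₂ z = z`, and at `(w, z)` it forces uniqueness.
-/

open Filter Topology Function

section Iterate

variable {α : Type*} {f : α → α} {φ : α → ℝ} {r : ℝ}

theorem le_mul_pow_of_map_le_mul (hr : 0 ≤ r) (hφ : ∀ x, φ (f x) ≤ r * φ x) (x : α) (n : ℕ) :
    φ (f^[n] x) ≤ φ x * r ^ n := by
  induction n with
  | zero => simp
  | succ n ih =>
    rw [iterate_succ_apply']
    calc φ (f (f^[n] x)) ≤ r * φ (f^[n] x) := hφ _
      _ ≤ r * (φ x * r ^ n) := mul_le_mul_of_nonneg_left ih hr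
      _ = φ x * r ^ (n + 1) := by ring

theorem tendsto_iterate_of_map_le_mul (hr₀ : 0 ≤ r) (hr₁ : r < 1) (hφ₀ : ∀ x, 0 ≤ φ x)
    (hφ : ∀ x, φ (f x) ≤ r * φ x) (x : α) :
    Tendsto (fun n => φ (f^[n] x)) atTop (𝓝 0) :=
  squeeze_zero (fun _ => hφ₀ _) (le_mul_pow_of_map_le_mul hr₀ hφ x) <| by
    simpa using (tendsto_pow_atTop_nhds_zero_of_lt_one hr₀ hr₁).const_mul (φ x)

theorem cauchySeq_iterate_of_dist_le_mul [PseudoMetricSpace α] {K : ℝ} (hr₀ : 0 ≤ r)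
    (hr₁ : r < 1) (hK : 0 ≤ K) (hφ : ∀ x, φ (f x) ≤ r * φ x)
    (hdist : ∀ x, dist x (f x) ≤ K * φ x) (x : α) :
    CauchySeq fun n => f^[n] x :=
  cauchySeq_of_le_geometric r (K * φ x) hr₁ fun n => by
    rw [iterate_succ_apply']
    calc dist (f^[n] x) (f (f^[n] x)) ≤ K * φ (f^[n] x) := hdist _
      _ ≤ K * (φ x * r ^ n) := mul_le_mul_of_nonneg_left (le_mul_pow_of_map_le_mul hr₀ hφ x n) hK
      _ = K * φ x * r ^ n := by ring

end Iterate

theorem eq_of_dist_le_mul_dist {C : Type*} [MetricSpace C] {x y : C} {c : ℝ} (hc : c < 1)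
    (h : dist x y ≤ c * dist x y) : x = y :=
  dist_le_zero.1 (by nlinarith [dist_nonneg (x := x) (y := y)])

def IsReichPair {C : Type*} [MetricSpace C] (M N O : ℝ) (T₁ T₂ : C → C) : Prop :=
  ∀ x y : C, dist (T₁ x) (T₂ y) ≤ M * dist x y + N * dist x (T₁ x) + O * dist y (T₂ y)

namespace IsReichPair

variable {C : Type*} [MetricSpace C] {M N O : ℝ} {T₁ T₂ : C → C}

theorem swap (hT : IsReichPair M N O T₁ T₂) : IsReichPair M O N T₂ T₁ := fun x y => by
  have := hT y x
  rw [dist_comm (T₂ x), dist_comm x y]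
  linarith

theorem dist_apply_apply_le (hT : IsReichPair M N O T₁ T₂) (hO : O < 1) (x : C) :
    dist (T₁ x) (T₂ (T₁ x)) ≤ (M + N) / (1 - O) * dist x (T₁ x) := by
  rw [div_mul_eq_mul_div, le_div_iff₀ (by linarith)]
  linarith [hT x (T₁ x)]

theorem apply_eq_self_of_apply_eq_self (hT : IsReichPair M N O T₁ T₂) (hO : O < 1) {z : C}
    (hz : T₁ z = z) : T₂ z = z := by
  refine (eq_of_dist_le_mul_dist hO ?_).symm
  simpa [hz] using hT z z

theorem eq_of_apply_eq_self (hT : IsReichPair M N O T₁ T₂) (hM : M < 1) {w z : C}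
    (hw : T₁ w = w) (hz : T₂ z = z) : w = z :=
  eq_of_dist_le_mul_dist hM (by simpa [hw, hz] using hT w z)

theorem apply_eq_self_of_tendsto (hT : IsReichPair M N O T₁ T₂) (hN : N < 1) {ι : Type*}
    {l : Filter ι} [l.NeBot] {y : ι → C} {z : C} (hy : Tendsto y l (𝓝 z))
    (hTy : Tendsto (fun i => T₂ (y i)) l (𝓝 z)) : T₁ z = z := by
  have hlim : dist (T₁ z) z ≤ M * dist z z + N * dist z (T₁ z) + O * dist z z :=
    le_of_tendsto_of_tendsto' (tendsto_const_nhds.dist hTy)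
      (((tendsto_const_nhds.dist hy).const_mul M |>.add_const _).add
        ((hy.dist hTy).const_mul O)) fun i => hT z (y i)
  refine eq_of_dist_le_mul_dist hN ?_
  simpa [dist_comm z] using hlim

theorem exists_apply_eq_self [CompleteSpace C] [Nonempty C] (hT : IsReichPair M N O T₁ T₂)
    (hM : 0 ≤ M) (hN : 0 ≤ N) (hO : 0 ≤ O) (hsum : M + N + O < 1) : ∃ z, T₁ z = z := by
  set k₁ := (M + N) / (1 - O)
  set k₂ := (M + O) / (1 - N)
  have hk₁ : 0 ≤ k₁ := div_nonneg (by linarith) (by linarith)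
  have hk₂ : 0 ≤ k₂ := div_nonneg (by linarith) (by linarith)
  have hk₁' : k₁ < 1 := (div_lt_one (by linarith)).2 (by linarith)
  have hk₂' : k₂ < 1 := (div_lt_one (by linarith)).2 (by linarith)
  have hshrink : ∀ x, dist (T₂ (T₁ x)) (T₁ (T₂ (T₁ x))) ≤ k₂ * k₁ * dist x (T₁ x) := fun x =>
    calc dist (T₂ (T₁ x)) (T₁ (T₂ (T₁ x))) ≤ k₂ * dist (T₁ x) (T₂ (T₁ x)) :=
          hT.swap.dist_apply_apply_le (by linarith) _
      _ ≤ k₂ * (k₁ * dist x (T₁ x)) :=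
          mul_le_mul_of_nonneg_left (hT.dist_apply_apply_le (by linarith) x) hk₂
      _ = k₂ * k₁ * dist x (T₁ x) := by ring
  have hstep : ∀ x, dist x (T₂ (T₁ x)) ≤ (1 + k₁) * dist x (T₁ x) := fun x => by
    linarith [dist_triangle x (T₁ x) (T₂ (T₁ x)), hT.dist_apply_apply_le (by linarith) x]
  have hr₀ := mul_nonneg hk₂ hk₁
  have hr₁ := mul_lt_one_of_nonneg_of_lt_one_left hk₂ hk₂' hk₁'.le
  obtain ⟨x₀⟩ := ‹Nonempty C›
  obtain ⟨z, hz⟩ := cauchySeq_tendsto_of_complete <|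
    cauchySeq_iterate_of_dist_le_mul hr₀ hr₁ (by linarith) hshrink hstep x₀
  refine ⟨z, hT.apply_eq_self_of_tendsto (by linarith)
    (tendsto_of_tendsto_of_dist hz <|
      tendsto_iterate_of_map_le_mul (φ := fun x => dist x (T₁ x)) hr₀ hr₁ (fun _ => dist_nonneg)
        hshrink x₀) ?_⟩
  exact (hz.comp (tendsto_add_atTop_nat 1)).congr fun n => iterate_succ_apply' _ n x₀

end IsReichPair

/-- Reich-type common fixed point theorem for a pair of maps. -/
theorem stmt8 {C : Type*} [MetricSpace C] [CompleteSpace C] [Nonempty C]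
    (M N O : ℝ) (hM : 0 ≤ M) (hN : 0 ≤ N) (hO : 0 ≤ O) (hsum : M + N + O < 1)
    (T₁ T₂ : C → C)
    (hT : ∀ x y : C,
      dist (T₁ x) (T₂ y) ≤
        M * dist x y + N * dist x (T₁ x) + O * dist y (T₂ y)) :
    ∃! z : C, T₁ z = z ∧ T₂ z = z := by
  have hReich : IsReichPair M N O T₁ T₂ := hT
  obtain ⟨z, h₁⟩ := hReich.exists_apply_eq_self hM hN hO hsum
  have h₂ := hReich.apply_eq_self_of_apply_eq_self (by linarith) h₁
  exact ⟨z, ⟨h₁, h₂⟩, fun w hw => hReich.eq_of_apply_eq_self (by linarith) hw.1 h₂⟩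
end

section
/- Let (C,d) be a complete metric space, α ∈ [0,1), and T₁, T₂ : C → C satisfy d(T₁x, T₂y) ≤ α · max{d(x,y), d(x,T₁x), d(y,T₂y)} for all x,y ∈ C. Then T₁ and T₂ have a unique common fixed point. -/
/-!
Iterate `T₂ ∘ T₁` from any point `a`. The condition at `(a, T₁ a)` gives
`d(T₁ a, T₂ T₁ a) ≤ α · d(a, T₁ a)`, and at `(T₂ b, b)` the mirror inequality, so each
half-step shrinks the displacement by the factor `α`: the iterates `xₙ` form a Cauchy sequence
whose limit `z` is also the limit of the intermediate points `T₁ xₙ`. Passing to the limit in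
the condition at `(z, T₁ xₙ)` gives `d(T₁ z, z) ≤ α · d(z, T₁ z)`, hence `T₁ z = z`; the
condition at `(z, z)` and at two common fixed points then gives `T₂ z = z` and uniqueness.
-/

open Filter Function Topology

lemma le_mul_of_le_mul_max {α u v : ℝ} (hα : α < 1) (hv : 0 ≤ v) (h : u ≤ α * max v u) :
    u ≤ α * v := by
  rcases le_total u v with huv | hvu
  · rwa [max_eq_left huv] at h
  · rw [max_eq_right hvu] at h
    have hu : u ≤ 0 := by nlinarith
    rw [show v = 0 by linarith, mul_zero]
    exact hu

lemma eq_of_dist_le_mul {C : Type*} [MetricSpace C] {α : ℝ} (hα : α < 1) {p q : C}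
    (h : dist p q ≤ α * dist p q) : p = q :=
  dist_le_zero.1 (by nlinarith [dist_nonneg (x := p) (y := q)])

def IsCiricPair {C : Type*} [MetricSpace C] (α : ℝ) (T₁ T₂ : C → C) : Prop :=
  ∀ x y, dist (T₁ x) (T₂ y) ≤ α * max (max (dist x y) (dist x (T₁ x))) (dist y (T₂ y))

namespace IsCiricPair

variable {C : Type*} [MetricSpace C] {α : ℝ} {T₁ T₂ : C → C}

lemma symm (hT : IsCiricPair α T₁ T₂) : IsCiricPair α T₂ T₁ := fun x y => by
  rw [dist_comm, dist_comm x, max_right_comm]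
  exact hT y x

lemma dist_apply_apply_le (hT : IsCiricPair α T₁ T₂) (hα : α < 1) (a : C) :
    dist (T₁ a) (T₂ (T₁ a)) ≤ α * dist a (T₁ a) := by
  have h := hT a (T₁ a)
  rw [max_self] at h
  exact le_mul_of_le_mul_max hα dist_nonneg h

lemma dist_comp_apply_le (hT : IsCiricPair α T₁ T₂) (hα0 : 0 ≤ α) (hα1 : α < 1) (a : C) :
    dist ((T₂ ∘ T₁) a) (T₁ ((T₂ ∘ T₁) a)) ≤ α ^ 2 * dist a (T₁ a) :=
  calc dist (T₂ (T₁ a)) (T₁ (T₂ (T₁ a)))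
      ≤ α * dist (T₁ a) (T₂ (T₁ a)) := hT.symm.dist_apply_apply_le hα1 _
    _ ≤ α * (α * dist a (T₁ a)) := by gcongr; exact hT.dist_apply_apply_le hα1 a
    _ = α ^ 2 * dist a (T₁ a) := by ring

lemma dist_iterate_apply_le (hT : IsCiricPair α T₁ T₂) (hα0 : 0 ≤ α) (hα1 : α < 1) (a : C)
    (n : ℕ) : dist ((T₂ ∘ T₁)^[n] a) (T₁ ((T₂ ∘ T₁)^[n] a)) ≤ dist a (T₁ a) * (α ^ 2) ^ n := by
  induction n with
  | zero => simp
  | succ n ih =>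
    rw [Function.iterate_succ_apply', pow_succ, ← mul_assoc, mul_comm _ (α ^ 2)]
    exact (hT.dist_comp_apply_le hα0 hα1 _).trans (by gcongr)

lemma cauchySeq_iterate (hT : IsCiricPair α T₁ T₂) (hα0 : 0 ≤ α) (hα1 : α < 1) (a : C) :
    CauchySeq fun n => (T₂ ∘ T₁)^[n] a := by
  refine cauchySeq_of_le_geometric (α ^ 2) ((1 + α) * dist a (T₁ a)) (by nlinarith) fun n => ?_
  set x := (T₂ ∘ T₁)^[n] a
  have hx := hT.dist_iterate_apply_le hα0 hα1 a n
  calc dist x ((T₂ ∘ T₁)^[n + 1] a)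
      ≤ dist x (T₁ x) + dist (T₁ x) (T₂ (T₁ x)) := by
        rw [Function.iterate_succ_apply']
        exact dist_triangle _ _ _
    _ ≤ (1 + α) * dist x (T₁ x) := by linarith [hT.dist_apply_apply_le hα1 x]
    _ ≤ (1 + α) * (dist a (T₁ a) * (α ^ 2) ^ n) := by gcongr
    _ = _ := by ring

lemma tendsto_dist_iterate_apply (hT : IsCiricPair α T₁ T₂) (hα0 : 0 ≤ α) (hα1 : α < 1) (a : C) :
    Tendsto (fun n => dist ((T₂ ∘ T₁)^[n] a) (T₁ ((T₂ ∘ T₁)^[n] a))) atTop (𝓝 0) := by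
  refine squeeze_zero (fun _ => dist_nonneg) (hT.dist_iterate_apply_le hα0 hα1 a) ?_
  simpa using (tendsto_pow_atTop_nhds_zero_of_lt_one (sq_nonneg α) (by nlinarith)).const_mul
    (dist a (T₁ a))

lemma isFixedPt_left_of_tendsto {ι : Type*} {l : Filter ι} [l.NeBot] (hT : IsCiricPair α T₁ T₂)
    (hα : α < 1) {y : ι → C} {z : C} (hy : Tendsto y l (𝓝 z))
    (hTy : Tendsto (T₂ ∘ y) l (𝓝 z)) : IsFixedPt T₁ z := by
  have hlim := le_of_tendsto_of_tendsto' (tendsto_const_nhds.dist hTy)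
    ((tendsto_const_nhds.dist hy).max tendsto_const_nhds |>.max (hy.dist hTy)
      |>.const_mul α) fun n => hT z (y n)
  simp only [dist_self, dist_nonneg, max_eq_left, max_eq_right] at hlim
  rw [dist_comm z] at hlim
  exact eq_of_dist_le_mul hα hlim

lemma isFixedPt_right_of_isFixedPt_left (hT : IsCiricPair α T₁ T₂) (hα : α < 1) {z : C}
    (hz : IsFixedPt T₁ z) : IsFixedPt T₂ z := by
  have h := hT z z
  simp only [hz.eq, dist_self, max_self, dist_nonneg, max_eq_right] at h
  exact (eq_of_dist_le_mul hα h).symm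

lemma eq_of_isFixedPt (hT : IsCiricPair α T₁ T₂) (hα : α < 1) {w z : C} (hw : IsFixedPt T₁ w)
    (hz : IsFixedPt T₂ z) : w = z := by
  have h := hT w z
  simp only [hw.eq, hz.eq, dist_self, dist_nonneg, max_eq_left] at h
  exact eq_of_dist_le_mul hα h

end IsCiricPair

/-- Ćirić-type common fixed point theorem for a pair of maps. -/
theorem stmt9 {C : Type*} [MetricSpace C] [CompleteSpace C] [Nonempty C]
    (α : ℝ) (hα0 : 0 ≤ α) (hα1 : α < 1)
    (T₁ T₂ : C → C)
    (hT : ∀ x y : C,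
      dist (T₁ x) (T₂ y) ≤
        α * max (max (dist x y) (dist x (T₁ x))) (dist y (T₂ y))) :
    ∃! z : C, T₁ z = z ∧ T₂ z = z := by
  obtain ⟨a⟩ := ‹Nonempty C›
  have hT : IsCiricPair α T₁ T₂ := hT
  set x := fun n => (T₂ ∘ T₁)^[n] a
  obtain ⟨z, hx⟩ := cauchySeq_tendsto_of_complete (hT.cauchySeq_iterate hα0 hα1 a)
  have hT₁x : Tendsto (T₁ ∘ x) atTop (𝓝 z) :=
    hx.congr_dist (hT.tendsto_dist_iterate_apply hα0 hα1 a)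
  have hT₂T₁x : Tendsto (T₂ ∘ T₁ ∘ x) atTop (𝓝 z) := by
    convert hx.comp (tendsto_add_atTop_nat 1) using 1
    exact funext fun n => (Function.iterate_succ_apply' (T₂ ∘ T₁) n a).symm
  have hz₁ : IsFixedPt T₁ z := hT.isFixedPt_left_of_tendsto hα1 hT₁x hT₂T₁x
  have hz₂ : IsFixedPt T₂ z := hT.isFixedPt_right_of_isFixedPt_left hα1 hz₁
  exact ⟨z, ⟨hz₁, hz₂⟩, fun w hw => hT.eq_of_isFixedPt hα1 hw.1 hz₂⟩
end

section
/- For the Thompson metric d on P(n) and any A, B, C, D ∈ P(n), d(A+B, C+D) ≤ max{d(A,C), d(B,D)}. In particular d(A+B, A+D) ≤ d(B,D). -/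
open Matrix ComplexOrder

/-- W(A/B) = inf{δ > 0 : A ≤ δB} in the Loewner order on complex matrices. -/
noncomputable def W {n : ℕ} (A B : Matrix (Fin n) (Fin n) ℂ) : ℝ :=
  sInf {δ : ℝ | 0 < δ ∧ (δ • B - A).PosSemidef}

/-- The Thompson metric d(A,B) = max{log W(A/B), log W(B/A)}. -/
noncomputable def thompsonDist {n : ℕ} (A B : Matrix (Fin n) (Fin n) ℂ) : ℝ :=
  max (Real.log (W A B)) (Real.log (W B A))

/-!
Sums preserve Loewner bounds: `A ≤ δ C` and `B ≤ δ D` give `A + B ≤ δ (C + D)`. Since the sets of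
admissible `δ` are upward closed, a common `δ` can be taken arbitrarily close to
`max (W A C) (W B D)`, hence `W (A + B) (C + D) ≤ max (W A C) (W B D)`, and taking logarithms (in
both orders) gives the bound on `thompsonDist`. The second claim follows from `d(A, A) = 0` and
`d(B, D) ≥ 0`; both come from comparing `W` with ratios of quadratic forms `x⋆ A x / x⋆ C x`.
-/

open scoped MatrixOrder

section LoewnerOrder

variable {ι 𝕜 : Type*} [Fintype ι] [RCLike 𝕜]

theorem Matrix.exists_pos_le_smul_of_posDef [DecidableEq ι] {A C : Matrix ι ι 𝕜}
    (hA : A.IsHermitian) (hC : C.PosDef) : ∃ δ : ℝ, 0 < δ ∧ A ≤ δ • C := by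
  obtain ⟨r, hr, hrC⟩ : ∃ r > 0, algebraMap ℝ (Matrix ι ι 𝕜) r ≤ C := by
    rcases subsingleton_or_nontrivial (Matrix ι ι 𝕜) with _ | _
    · exact ⟨1, one_pos, (Subsingleton.elim _ _).le⟩
    · exact (CFC.exists_pos_algebraMap_le_iff hC.isHermitian.isSelfAdjoint).2
        fun _ hx ↦ hC.isStrictlyPositive.spectrum_pos hx
  obtain ⟨R, hR⟩ := A.finite_real_spectrum.bddAbove
  refine ⟨max R 1 / r, by positivity, ?_⟩
  calc A ≤ algebraMap ℝ (Matrix ι ι 𝕜) (max R 1) :=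
        le_algebraMap_of_spectrum_le (fun _ hx ↦ (hR hx).trans (le_max_left _ _))
          hA.isSelfAdjoint
    _ = (max R 1 / r) • algebraMap ℝ (Matrix ι ι 𝕜) r := by
        rw [Algebra.algebraMap_eq_smul_one, Algebra.algebraMap_eq_smul_one, smul_smul,
          div_mul_cancel₀ _ hr.ne']
    _ ≤ (max R 1 / r) • C := smul_le_smul_of_nonneg_left hrC (by positivity)

theorem Matrix.re_dotProduct_le_of_le_smul {A C : Matrix ι ι 𝕜} {δ : ℝ} (h : A ≤ δ • C)
    (x : ι → 𝕜) :
    RCLike.re (star x ⬝ᵥ A *ᵥ x) ≤ δ * RCLike.re (star x ⬝ᵥ C *ᵥ x) := by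
  have := (Matrix.le_iff.1 h).re_dotProduct_nonneg x
  rw [sub_mulVec, smul_mulVec, dotProduct_sub, dotProduct_smul, map_sub, RCLike.smul_re] at this
  linarith

end LoewnerOrder

namespace Thompson

variable {n : ℕ} {A B C D : Matrix (Fin n) (Fin n) ℂ}

def dominatingScalars (A C : Matrix (Fin n) (Fin n) ℂ) : Set ℝ :=
  {δ | 0 < δ ∧ A ≤ δ • C}

theorem W_eq_sInf (A C : Matrix (Fin n) (Fin n) ℂ) : W A C = sInf (dominatingScalars A C) := rfl

theorem bddBelow_dominatingScalars (A C : Matrix (Fin n) (Fin n) ℂ) :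
    BddBelow (dominatingScalars A C) :=
  ⟨0, fun _ hδ ↦ hδ.1.le⟩

theorem dominatingScalars_nonempty (hA : A.IsHermitian) (hC : C.PosDef) :
    (dominatingScalars A C).Nonempty :=
  Matrix.exists_pos_le_smul_of_posDef hA hC

theorem mem_dominatingScalars_of_le {δ δ' : ℝ} (hC : C.PosSemidef)
    (hδ : δ ∈ dominatingScalars A C) (h : δ ≤ δ') : δ' ∈ dominatingScalars A C :=
  ⟨hδ.1.trans_le h, hδ.2.trans (smul_le_smul_of_nonneg_right h hC.nonneg)⟩

theorem add_mem_dominatingScalars {δ : ℝ} (hAC : δ ∈ dominatingScalars A C)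
    (hBD : δ ∈ dominatingScalars B D) : δ ∈ dominatingScalars (A + B) (C + D) :=
  ⟨hAC.1, smul_add δ C D ▸ add_le_add hAC.2 hBD.2⟩

theorem W_add_le (hA : A.IsHermitian) (hB : B.IsHermitian) (hC : C.PosDef) (hD : D.PosDef) :
    W (A + B) (C + D) ≤ max (W A C) (W B D) := by
  refine le_of_forall_pos_le_add fun ε hε ↦ ?_
  obtain ⟨a, ha, haW⟩ := Real.lt_sInf_add_pos (dominatingScalars_nonempty hA hC) hε
  obtain ⟨b, hb, hbW⟩ := Real.lt_sInf_add_pos (dominatingScalars_nonempty hB hD) hε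
  have hab : max a b ∈ dominatingScalars (A + B) (C + D) :=
    add_mem_dominatingScalars (mem_dominatingScalars_of_le hC.posSemidef ha (le_max_left a b))
      (mem_dominatingScalars_of_le hD.posSemidef hb (le_max_right a b))
  calc W (A + B) (C + D) ≤ max a b := csInf_le (bddBelow_dominatingScalars _ _) hab
    _ ≤ max (W A C + ε) (W B D + ε) := max_le_max haW.le hbW.le
    _ = max (W A C) (W B D) + ε := max_add_add_right _ _ _

theorem re_dotProduct_div_le_W (hA : A.IsHermitian) (hC : C.PosDef) {x : Fin n → ℂ}
    (hx : x ≠ 0) : RCLike.re (star x ⬝ᵥ A *ᵥ x) / RCLike.re (star x ⬝ᵥ C *ᵥ x) ≤ W A C :=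
  le_csInf (dominatingScalars_nonempty hA hC) fun δ hδ ↦
    (div_le_iff₀ (hC.re_dotProduct_pos hx)).2 (mul_comm δ _ ▸ re_dotProduct_le_of_le_smul hδ.2 x)

theorem W_of_isEmpty [IsEmpty (Fin n)] (A C : Matrix (Fin n) (Fin n) ℂ) : W A C = 0 := by
  have : dominatingScalars A C = Set.Ioi 0 :=
    Set.ext fun δ ↦ and_iff_left (Subsingleton.elim A (δ • C)).le
  rw [W_eq_sInf, this, csInf_Ioi]

variable [Nonempty (Fin n)]

theorem W_pos (hA : A.PosDef) (hC : C.PosDef) : 0 < W A C := by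
  obtain ⟨x, hx⟩ := exists_ne (0 : Fin n → ℂ)
  exact (div_pos (hA.re_dotProduct_pos hx) (hC.re_dotProduct_pos hx)).trans_le
    (re_dotProduct_div_le_W hA.isHermitian hC hx)

theorem W_self (hA : A.PosDef) : W A A = 1 := by
  obtain ⟨x, hx⟩ := exists_ne (0 : Fin n → ℂ)
  refine le_antisymm (csInf_le (bddBelow_dominatingScalars A A) ⟨one_pos, (one_smul ℝ A).ge⟩) ?_
  have h := re_dotProduct_div_le_W hA.isHermitian hA hx
  rwa [div_self (hA.re_dotProduct_pos hx).ne'] at h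

theorem one_le_W_mul_W (hB : B.PosDef) (hD : D.PosDef) : 1 ≤ W B D * W D B := by
  obtain ⟨x, hx⟩ := exists_ne (0 : Fin n → ℂ)
  have hqB := hB.re_dotProduct_pos hx
  have hqD := hD.re_dotProduct_pos hx
  calc (1 : ℝ) = RCLike.re (star x ⬝ᵥ B *ᵥ x) / RCLike.re (star x ⬝ᵥ D *ᵥ x) *
        (RCLike.re (star x ⬝ᵥ D *ᵥ x) / RCLike.re (star x ⬝ᵥ B *ᵥ x)) := by
        field_simp
    _ ≤ W B D * W D B :=
        mul_le_mul (re_dotProduct_div_le_W hB.isHermitian hD hx)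
          (re_dotProduct_div_le_W hD.isHermitian hB hx) (div_pos hqD hqB).le (W_pos hB hD).le

theorem log_W_add_le (hA : A.PosDef) (hB : B.PosDef) (hC : C.PosDef) (hD : D.PosDef) :
    Real.log (W (A + B) (C + D)) ≤ max (Real.log (W A C)) (Real.log (W B D)) := by
  have hpos := W_pos (hA.add hB) (hC.add hD)
  exact le_max_iff.2 <| (le_max_iff.1 (W_add_le hA.isHermitian hB.isHermitian hC hD)).imp
    (Real.log_le_log hpos) (Real.log_le_log hpos)

theorem thompsonDist_self (hA : A.PosDef) : thompsonDist A A = 0 := by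
  simp [thompsonDist, W_self hA]

theorem thompsonDist_nonneg (hB : B.PosDef) (hD : D.PosDef) : 0 ≤ thompsonDist B D := by
  have h := Real.log_nonneg (one_le_W_mul_W hB hD)
  rw [Real.log_mul (W_pos hB hD).ne' (W_pos hD hB).ne'] at h
  have := le_max_left (Real.log (W B D)) (Real.log (W D B))
  have := le_max_right (Real.log (W B D)) (Real.log (W D B))
  unfold thompsonDist
  linarith

theorem thompsonDist_add_le (hA : A.PosDef) (hB : B.PosDef) (hC : C.PosDef) (hD : D.PosDef) :
    thompsonDist (A + B) (C + D) ≤ max (thompsonDist A C) (thompsonDist B D) :=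
  max_le ((log_W_add_le hA hB hC hD).trans (max_le_max (le_max_left _ _) (le_max_left _ _)))
    ((log_W_add_le hC hD hA hB).trans (max_le_max (le_max_right _ _) (le_max_right _ _)))

end Thompson

open Thompson in
/-- Subadditivity of the Thompson metric under sums:
d(A+B, C+D) ≤ max{d(A,C), d(B,D)}; in particular d(A+B, A+D) ≤ d(B,D). -/
theorem stmt15 {n : ℕ} (A B C D : Matrix (Fin n) (Fin n) ℂ)
    (hA : A.PosDef) (hB : B.PosDef) (hC : C.PosDef) (hD : D.PosDef) :
    thompsonDist (A + B) (C + D) ≤ max (thompsonDist A C) (thompsonDist B D) ∧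
    thompsonDist (A + B) (A + D) ≤ thompsonDist B D := by
  rcases isEmpty_or_nonempty (Fin n) with hn | hn
  · simp [thompsonDist, W_of_isEmpty]
  · refine ⟨thompsonDist_add_le hA hB hC hD, ?_⟩
    simpa [thompsonDist_self hA, max_eq_right (thompsonDist_nonneg hB hD)] using
      thompsonDist_add_le hA hB hA hD
end

section
/- Let d be the Thompson metric on P(n), m ≥ 1, A₁,…,A_m invertible n×n complex matrices, and X₁,…,X_m, Y₁,…,Y_m ∈ P(n). Then d(Σᵢ Aᵢ* Xᵢ Aᵢ, Σᵢ Aᵢ* Yᵢ Aᵢ) ≤ maxᵢ d(Xᵢ, Yᵢ). -/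
open Matrix ComplexOrder

/-!
If `X i ≤ t • Y i` for every `i`, then congruence by `A i` and summation preserve the Loewner
order, so `∑ (A i)ᴴ X i A i ≤ t • ∑ (A i)ᴴ Y i A i`. Taking `t` just above `exp M`, where `M`
is the largest of the distances `d(X i, Y i)`, bounds both `W`-quotients of the sums by `exp M`.
The Thompson distance between positive definite matrices is nonnegative, because
`X ≤ a • Y ≤ (a * b) • X` forces `a * b ≥ 1`; hence `M ≥ 0`, which also covers a degenerate
quotient `W = 0`, whose logarithm is the junk value `Real.log 0 = 0`.
-/

open scoped MatrixOrder
open Filter Topology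

namespace Matrix

variable {ι 𝕜 : Type*} [Fintype ι] [DecidableEq ι] [RCLike 𝕜] {X Y : Matrix ι ι 𝕜}

lemma exists_le_smul_of_posDef (hX : X.IsHermitian) (hY : Y.PosDef) :
    ∃ δ : ℝ, 0 < δ ∧ X ≤ δ • Y := by
  rcases subsingleton_or_nontrivial (Matrix ι ι 𝕜) with _ | _
  · exact ⟨1, one_pos, (Subsingleton.elim _ _).le⟩
  obtain ⟨r, hr, hrY⟩ := (CFC.exists_pos_algebraMap_le_iff hY.1.isSelfAdjoint).2
    fun _ hx => (isStrictlyPositive_iff_posDef.2 hY).spectrum_pos hx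
  have hcompact : IsCompact (spectrum ℝ X) := isCompact_iff_compactSpace.2 inferInstance
  obtain ⟨C, hC⟩ := hcompact.bddAbove
  refine ⟨max C 1 / r, by positivity, ?_⟩
  calc X ≤ algebraMap ℝ _ (max C 1) :=
        le_algebraMap_of_spectrum_le (fun _ hx => (hC hx).trans (le_max_left _ _)) hX.isSelfAdjoint
    _ = (max C 1 / r) • algebraMap ℝ _ r := by
        rw [Algebra.algebraMap_eq_smul_one, Algebra.algebraMap_eq_smul_one, smul_smul,
          div_mul_cancel₀ _ hr.ne']
    _ ≤ (max C 1 / r) • Y := smul_le_smul_of_nonneg_left hrY (by positivity)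

lemma one_le_mul_of_le_smul_of_le_smul [Nonempty ι] (hX : X.PosDef) {a b : ℝ} (ha : 0 ≤ a)
    (hXY : X ≤ a • Y) (hYX : Y ≤ b • X) : 1 ≤ a * b := by
  have hX_le : X ≤ (a * b) • X :=
    hXY.trans (by rw [mul_smul]; exact smul_le_smul_of_nonneg_left hYX ha)
  by_contra! hab
  have hneg : (a * b - 1) • X ≤ 0 :=
    smul_nonpos_of_nonpos_of_nonneg (by linarith) hX.posSemidef.nonneg
  have hpos : 0 ≤ (a * b - 1) • X := by rw [sub_smul, one_smul]; exact sub_nonneg.2 hX_le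
  have hzero : (a * b - 1) • X = 0 := le_antisymm hneg hpos
  rw [smul_eq_zero] at hzero
  exact hzero.elim (fun h => by linarith) hX.isUnit.ne_zero

end Matrix

variable {n : ℕ} {X Y : Matrix (Fin n) (Fin n) ℂ}

lemma W_nonneg : 0 ≤ W X Y := Real.sInf_nonneg fun _ h => h.1.le

lemma W_le_of_le_smul {t : ℝ} (ht : 0 < t) (h : X ≤ t • Y) : W X Y ≤ t :=
  csInf_le ⟨0, fun _ h => h.1.le⟩ ⟨ht, h⟩

lemma le_smul_of_W_lt (hX : X.IsHermitian) (hY : Y.PosDef) {t : ℝ} (ht : W X Y < t) :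
    X ≤ t • Y := by
  have hne : {δ : ℝ | 0 < δ ∧ (δ • Y - X).PosSemidef}.Nonempty := exists_le_smul_of_posDef hX hY
  obtain ⟨δ, ⟨-, hXδ⟩, hδt⟩ := (csInf_lt_iff ⟨0, fun _ h => h.1.le⟩ hne).1 ht
  exact (show X ≤ δ • Y from hXδ).trans
    (smul_le_smul_of_nonneg_right hδt.le hY.posSemidef.nonneg)

lemma W_eq_zero_of_isEmpty [IsEmpty (Fin n)] : W X Y = 0 := by
  have hset : {δ : ℝ | 0 < δ ∧ (δ • Y - X).PosSemidef} = Set.Ioi 0 :=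
    Set.ext fun δ => and_iff_left (Subsingleton.elim (δ • Y - X) 0 ▸ PosSemidef.zero)
  rw [W, hset, csInf_Ioi]

lemma one_le_W_mul_W [Nonempty (Fin n)] (hX : X.PosDef) (hY : Y.PosDef) :
    1 ≤ W X Y * W Y X := by
  have hlim :
      Tendsto (fun ε : ℝ => (W X Y + ε) * (W Y X + ε)) (𝓝[>] 0) (𝓝 (W X Y * W Y X)) := by
    have hcont : Continuous fun ε : ℝ => (W X Y + ε) * (W Y X + ε) := by fun_prop
    simpa using (hcont.tendsto 0).mono_left nhdsWithin_le_nhds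
  refine ge_of_tendsto hlim (eventually_nhdsWithin_of_forall fun ε (hε : 0 < ε) => ?_)
  exact one_le_mul_of_le_smul_of_le_smul hX (by linarith [W_nonneg (X := X) (Y := Y)])
    (le_smul_of_W_lt hX.1 hY (by linarith)) (le_smul_of_W_lt hY.1 hX (by linarith))

lemma thompsonDist_nonneg (hX : X.PosDef) (hY : Y.PosDef) : 0 ≤ thompsonDist X Y := by
  rcases isEmpty_or_nonempty (Fin n) with hn | hn
  · simp [thompsonDist, W_eq_zero_of_isEmpty]
  have hprod := one_le_W_mul_W hX hY
  have hprod_ne : W X Y * W Y X ≠ 0 := (one_pos.trans_le hprod).ne'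
  have hsum : 0 ≤ Real.log (W X Y) + Real.log (W Y X) := by
    rw [← Real.log_mul (left_ne_zero_of_mul hprod_ne) (right_ne_zero_of_mul hprod_ne)]
    exact Real.log_nonneg hprod
  unfold thompsonDist
  linarith [le_max_left (Real.log (W X Y)) (Real.log (W Y X)),
    le_max_right (Real.log (W X Y)) (Real.log (W Y X))]

lemma log_W_le_iff_le_exp {M : ℝ} (hM : 0 ≤ M) :
    Real.log (W X Y) ≤ M ↔ W X Y ≤ Real.exp M := by
  rcases W_nonneg.eq_or_lt with h0 | hpos
  · rw [← h0]; simp [hM, (Real.exp_pos M).le]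
  · exact Real.log_le_iff_le_exp hpos

section Congruence

variable {ι : Type*} [Fintype ι] (A X Y : ι → Matrix (Fin n) (Fin n) ℂ)

lemma W_sum_conj_le (hX : ∀ i, (X i).IsHermitian) (hY : ∀ i, (Y i).PosDef) {t : ℝ}
    (ht : 0 ≤ t) (h : ∀ i, W (X i) (Y i) ≤ t) :
    W (∑ i, (A i)ᴴ * X i * A i) (∑ i, (A i)ᴴ * Y i * A i) ≤ t := by
  refine le_of_forall_gt_imp_ge_of_dense fun δ hδ => W_le_of_le_smul (ht.trans_lt hδ) ?_
  rw [Finset.smul_sum]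
  refine Finset.sum_le_sum fun i _ => ?_
  rw [← smul_mul_assoc, ← mul_smul_comm]
  exact star_left_conjugate_le_conjugate (le_smul_of_W_lt (hX i) (hY i) ((h i).trans_lt hδ)) (A i)

lemma log_W_sum_conj_le (hX : ∀ i, (X i).IsHermitian) (hY : ∀ i, (Y i).PosDef) {M : ℝ}
    (hM : 0 ≤ M) (h : ∀ i, Real.log (W (X i) (Y i)) ≤ M) :
    Real.log (W (∑ i, (A i)ᴴ * X i * A i) (∑ i, (A i)ᴴ * Y i * A i)) ≤ M :=
  (log_W_le_iff_le_exp hM).2 <| W_sum_conj_le A X Y hX hY (Real.exp_pos M).le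
    fun i => (log_W_le_iff_le_exp hM).1 (h i)

end Congruence

theorem stmt16_general {n m : ℕ} (hm : 0 < m)
    (A : Fin m → Matrix (Fin n) (Fin n) ℂ)
    (X Y : Fin m → Matrix (Fin n) (Fin n) ℂ)
    (hX : ∀ i, (X i).PosDef) (hY : ∀ i, (Y i).PosDef) :
    thompsonDist (∑ i, (A i)ᴴ * X i * A i) (∑ i, (A i)ᴴ * Y i * A i) ≤
      Finset.univ.sup' ⟨⟨0, hm⟩, Finset.mem_univ _⟩
        (fun i => thompsonDist (X i) (Y i)) := by
  set M := Finset.univ.sup' ⟨⟨0, hm⟩, Finset.mem_univ _⟩ fun i => thompsonDist (X i) (Y i)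
  have hd : ∀ i, thompsonDist (X i) (Y i) ≤ M := fun i =>
    Finset.le_sup' (fun i => thompsonDist (X i) (Y i)) (Finset.mem_univ i)
  have hM : 0 ≤ M := (thompsonDist_nonneg (hX ⟨0, hm⟩) (hY _)).trans (hd _)
  exact max_le
    (log_W_sum_conj_le A X Y (fun i => (hX i).1) hY hM fun i => (le_max_left _ _).trans (hd i))
    (log_W_sum_conj_le A Y X (fun i => (hY i).1) hX hM fun i => (le_max_right _ _).trans (hd i))

/-- d(Σᵢ Aᵢ* Xᵢ Aᵢ, Σᵢ Aᵢ* Yᵢ Aᵢ) ≤ maxᵢ d(Xᵢ, Yᵢ) for invertible Aᵢ and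
positive definite Xᵢ, Yᵢ. -/
theorem stmt16 {n m : ℕ} (hm : 0 < m)
    (A : Fin m → Matrix (Fin n) (Fin n) ℂ) (hA : ∀ i, IsUnit (A i))
    (X Y : Fin m → Matrix (Fin n) (Fin n) ℂ)
    (hX : ∀ i, (X i).PosDef) (hY : ∀ i, (Y i).PosDef) :
    thompsonDist (∑ i, (A i)ᴴ * X i * A i) (∑ i, (A i)ᴴ * Y i * A i) ≤
      Finset.univ.sup' ⟨⟨0, hm⟩, Finset.mem_univ _⟩
        (fun i => thompsonDist (X i) (Y i)) :=
  stmt16_general hm A X Y hX hY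
end
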